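/- Let p be a prime, n ≥ 1, and G = Z_{p^n} ⊕ Z_{p^n}. The map H ↦ H^Δ := {p^m h : h ∈ H}, defined on cocyclic subgroups H ≅ Z_{p^n} ⊕ Z_{p^m} of G (i.e., subgroups with cyclic quotient), is a bijection between the set of cocyclic subgroups of G and the set of cyclic subgroups of G; moreover, it is order-reversing: H_1 ⊆ H_2 if and only if H_1^Δ ⊇ H_2^Δ. -/

import Mathlib

section
variable (p n : ℕ)

/-- `l(K) = log_p |K|`. -/
noncomputable def len (K : AddSubgroup (ZMod (p ^ n) × ZMod (p ^ n))) : ℕ :=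
  (Nat.card K).factorization p

/-- The multiplication-by-`pᵏ` endomorphism. -/
def pPow (k : ℕ) : (ZMod (p ^ n) × ZMod (p ^ n)) →+ (ZMod (p ^ n) × ZMod (p ^ n)) :=
  AddMonoidHom.mk' (fun x => p ^ k • x) (fun a b => smul_add _ a b)

/-- For a cocyclic subgroup `H ≅ ℤ_{pⁿ} ⊕ ℤ_{pᵐ}` (so `|H| = p^{n+m}`), `H^Δ = pᵐ H`. -/
noncomputable def deltaMap (H : AddSubgroup (ZMod (p ^ n) × ZMod (p ^ n))) :
    AddSubgroup (ZMod (p ^ n) × ZMod (p ^ n)) :=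
  H.map (pPow p n (len p n H - n))

end

/-!
Write `v ∧ x = v.1 * x.2 - v.2 * x.1` on `G = ℤ/pⁿ × ℤ/pⁿ`. A cyclic quotient of `G` embeds in
`ℤ/pⁿ`, and every homomorphism `G → ℤ/pⁿ` is `x ↦ w ∧ x` for some `w`, so every cocyclic subgroup
is `w^⊥ = {x | w ∧ x = 0}`. If `pʲ` generates the values of `w ∧ ·`, then `|w^⊥| = p^(n+j)`, so
`m = j`, and the identity `(w ∧ y) • x = (x ∧ y) • w + (w ∧ x) • y` gives `pʲ w^⊥ = ⟨w⟩`. Order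
reversal: `v^⊥ ≤ w^⊥` iff `w` is a multiple of `v`, since homomorphisms into `ℤ/pⁿ` with nested
kernels are proportional.
-/

open AddSubgroup

namespace ZMod

variable {N : ℕ}

theorem mem_zmultiples_iff_exists_smul {M : Type*} [AddCommGroup M] [Module (ZMod N) M]
    {x y : M} : y ∈ zmultiples x ↔ ∃ c : ZMod N, c • x = y := by
  rw [mem_zmultiples_iff]
  constructor
  · rintro ⟨k, rfl⟩
    exact ⟨k, Int.cast_smul_eq_zsmul _ k x⟩
  · rintro ⟨c, rfl⟩
    exact ⟨c.cast, by rw [← Int.cast_smul_eq_zsmul (ZMod N), intCast_zmod_cast]⟩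

theorem mem_zmultiples_iff_dvd {x y : ZMod N} : y ∈ zmultiples x ↔ x ∣ y := by
  rw [mem_zmultiples_iff_exists_smul (N := N)]
  exact exists_congr fun c ↦ by rw [smul_eq_mul, mul_comm, eq_comm]

theorem exists_dvd_and_eq_zmultiples [NeZero N] (S : AddSubgroup (ZMod N)) :
    ∃ g : ℕ, g ∣ N ∧ S = zmultiples (g : ZMod N) := by
  obtain ⟨r, rfl⟩ := (S.isAddCyclic_iff_exists_zmultiples_eq_top).1 inferInstance
  refine ⟨r.val.gcd N, Nat.gcd_dvd_right _ _, le_antisymm ?_ ?_⟩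
  · rw [zmultiples_le, mem_zmultiples_iff_dvd]
    simpa using Nat.cast_dvd_cast (α := ZMod N) (Nat.gcd_dvd_left r.val N)
  · rw [zmultiples_le, mem_zmultiples_iff_dvd, ← mul_inv_eq_gcd]
    exact dvd_mul_right _ _

theorem natCast_dvd_of_nsmul_eq_zero [NeZero N] {g : ℕ} (hg : g ∣ N) {t : ZMod N}
    (h : (N / g) • t = 0) : (g : ZMod N) ∣ t := by
  have hNg : 0 < N / g := Nat.div_pos (Nat.le_of_dvd (NeZero.pos N) hg)
    (Nat.pos_of_dvd_of_pos hg (NeZero.pos N))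
  rw [← natCast_zmod_val t, nsmul_eq_mul, ← Nat.cast_mul, natCast_eq_zero_iff] at h
  rw [← natCast_zmod_val t]
  refine Nat.cast_dvd_cast (Nat.dvd_of_mul_dvd_mul_left hNg ?_)
  rwa [Nat.div_mul_cancel hg]

end ZMod

section

variable {N : ℕ} {A : Type*} [AddCommGroup A]

theorem AddMonoidHom.exists_eq_mul_of_ker_le_ker [NeZero N] {f₁ f₂ : A →+ ZMod N}
    (h : f₁.ker ≤ f₂.ker) : ∃ c : ZMod N, ∀ x, f₂ x = c * f₁ x := by
  obtain ⟨g, hgN, hg⟩ := ZMod.exists_dvd_and_eq_zmultiples f₁.range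
  obtain ⟨x₀, hx₀⟩ : (g : ZMod N) ∈ f₁.range := hg ▸ mem_zmultiples _
  obtain ⟨c, hc⟩ : (g : ZMod N) ∣ f₂ x₀ := by
    refine ZMod.natCast_dvd_of_nsmul_eq_zero hgN ?_
    rw [← map_nsmul]
    refine h ?_
    rw [AddMonoidHom.mem_ker, map_nsmul, hx₀, nsmul_eq_mul, ← Nat.cast_mul,
      Nat.div_mul_cancel hgN, ZMod.natCast_self]
  refine ⟨c, fun x ↦ ?_⟩
  obtain ⟨k, hk⟩ : ∃ k : ℤ, k • (g : ZMod N) = f₁ x := by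
    rw [← mem_zmultiples_iff, ← hg]
    exact ⟨x, rfl⟩
  have hx : f₂ x = f₂ (k • x₀) := by
    rw [← sub_eq_zero, ← map_sub]
    refine h ?_
    rw [AddMonoidHom.mem_ker, map_sub, map_zsmul, hx₀, hk, sub_self]
  rw [hx, map_zsmul, hc, ← hk, zsmul_eq_mul, zsmul_eq_mul]
  ring

theorem AddMonoidHom.card_ker_mul_div_eq_card {f : A →+ ZMod N} [NeZero N] {g : ℕ} (hg : g ∣ N)
    (hrange : f.range = zmultiples (g : ZMod N)) : Nat.card f.ker * (N / g) = Nat.card A := by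
  rw [← f.ker.card_mul_index, index_ker, hrange, Nat.card_zmultiples,
    ZMod.addOrderOf_coe g (NeZero.ne N), Nat.gcd_eq_right hg]

theorem isAddCyclic_quotient_ker (f : A →+ ZMod N) : IsAddCyclic (A ⧸ f.ker) :=
  isAddCyclic_of_injective (QuotientAddGroup.kerLift f) (QuotientAddGroup.kerLift_injective f)

theorem exists_injective_addMonoidHom_zmod [NeZero N] {Q : Type*} [AddGroup Q] [IsAddCyclic Q]
    (hQ : ∀ q : Q, N • q = 0) : ∃ φ : Q →+ ZMod N, Function.Injective φ := by
  obtain ⟨q, hq⟩ := IsAddCyclic.exists_generator (α := Q)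
  have hk : addOrderOf q ∣ N := addOrderOf_dvd_of_nsmul_eq_zero (hQ q)
  have hord : addOrderOf ((N / addOrderOf q : ℕ) : ZMod N) = addOrderOf q := by
    rw [ZMod.addOrderOf_coe _ (NeZero.ne N), Nat.gcd_eq_right (Nat.div_dvd_of_dvd hk),
      Nat.div_div_self hk (NeZero.ne N)]
  refine ⟨addMonoidHomOfForallMemZMultiples hq hord.dvd, (injective_iff_map_eq_zero _).2 ?_⟩
  intro x hx
  obtain ⟨m, rfl⟩ := mem_zmultiples_iff.1 (hq x)
  rwa [map_zsmul, addMonoidHomOfForallMemZMultiples_apply_gen, ← addOrderOf_dvd_iff_zsmul_eq_zero,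
    hord, addOrderOf_dvd_iff_zsmul_eq_zero] at hx

theorem exists_eq_ker_of_isAddCyclic_quotient [NeZero N] (hA : ∀ x : A, N • x = 0)
    (H : AddSubgroup A) [IsAddCyclic (A ⧸ H)] : ∃ f : A →+ ZMod N, H = f.ker := by
  obtain ⟨φ, hφ⟩ := exists_injective_addMonoidHom_zmod (N := N) (Q := A ⧸ H) <| by
    rintro ⟨x⟩
    exact congrArg (QuotientAddGroup.mk (s := H)) (hA x)
  exact ⟨φ.comp (QuotientAddGroup.mk' H), by
    rw [AddMonoidHom.ker_comp_of_injective _ _ hφ, QuotientAddGroup.ker_mk']⟩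

end

section Wedge

variable {N : ℕ}

def wedge (w : ZMod N × ZMod N) : ZMod N × ZMod N →+ ZMod N :=
  AddMonoidHom.mk' (fun x ↦ w.1 * x.2 - w.2 * x.1) fun x y ↦ by
    simp only [Prod.fst_add, Prod.snd_add]
    ring

@[simp]
theorem wedge_apply (w x : ZMod N × ZMod N) : wedge w x = w.1 * x.2 - w.2 * x.1 := rfl

theorem wedge_smul_eq (w x y : ZMod N × ZMod N) :
    wedge w y • x = wedge x y • w + wedge w x • y := by
  ext <;> simp <;> ring

theorem eq_wedge (f : ZMod N × ZMod N →+ ZMod N) : f = wedge (f (0, 1), -f (1, 0)) := by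
  ext x
  have hx : x = x.1 • ((1, 0) : ZMod N × ZMod N) + x.2 • (0, 1) := by ext <;> simp
  conv_lhs => rw [hx, map_add, ZMod.map_smul, ZMod.map_smul]
  simp only [wedge_apply, smul_eq_mul]
  ring

theorem exists_eq_ker_wedge [NeZero N] (H : AddSubgroup (ZMod N × ZMod N))
    [IsAddCyclic ((ZMod N × ZMod N) ⧸ H)] : ∃ w, H = (wedge w).ker := by
  obtain ⟨f, rfl⟩ := exists_eq_ker_of_isAddCyclic_quotient (N := N) (fun x ↦ by ext <;> simp) H
  exact ⟨_, by rw [← eq_wedge f]⟩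

theorem map_nsmul_ker_wedge {w : ZMod N × ZMod N} {g : ℕ}
    (hrange : (wedge w).range = zmultiples (g : ZMod N)) :
    (wedge w).ker.map (DistribSMul.toAddMonoidHom _ g) = zmultiples w := by
  apply le_antisymm
  · rintro _ ⟨x, hx, rfl⟩
    obtain ⟨y, hy⟩ : (g : ZMod N) ∈ (wedge w).range := hrange ▸ mem_zmultiples _
    rw [SetLike.mem_coe, AddMonoidHom.mem_ker] at hx
    rw [ZMod.mem_zmultiples_iff_exists_smul (N := N)]
    refine ⟨wedge x y, ?_⟩
    simp only [DistribSMul.toAddMonoidHom_apply, ← Nat.cast_smul_eq_nsmul (ZMod N), ← hy,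
      wedge_smul_eq w x y, hx, zero_smul, add_zero]
  · have hdvd : ∀ x, (g : ZMod N) ∣ wedge w x := fun x ↦
      ZMod.mem_zmultiples_iff_dvd.1 (hrange ▸ ⟨x, rfl⟩)
    obtain ⟨c₁, hc₁⟩ := hdvd (0, 1)
    obtain ⟨c₂, hc₂⟩ := hdvd (-1, 0)
    simp only [wedge_apply, mul_zero, mul_one, sub_zero, zero_sub, mul_neg, neg_neg] at hc₁ hc₂
    rw [zmultiples_le]
    refine ⟨(c₁, c₂), ?_, ?_⟩
    · simp only [SetLike.mem_coe, AddMonoidHom.mem_ker, wedge_apply, hc₁, hc₂]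
      ring
    · ext <;> simp [← Nat.cast_smul_eq_nsmul (ZMod N), hc₁, hc₂]

theorem ker_wedge_le_ker_wedge_iff [NeZero N] {v w : ZMod N × ZMod N} :
    (wedge v).ker ≤ (wedge w).ker ↔ w ∈ zmultiples v := by
  rw [ZMod.mem_zmultiples_iff_exists_smul (N := N)]
  constructor
  · intro h
    obtain ⟨c, hc⟩ := AddMonoidHom.exists_eq_mul_of_ker_le_ker h
    have h₁ := hc (0, 1)
    have h₂ := hc (1, 0)
    simp only [wedge_apply, mul_zero, mul_one, sub_zero, zero_sub, mul_neg, neg_inj] at h₁ h₂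
    exact ⟨c, by ext <;> simp [h₁, h₂]⟩
  · rintro ⟨c, rfl⟩ x hx
    rw [AddMonoidHom.mem_ker, wedge_apply] at hx ⊢
    simp only [Prod.smul_fst, Prod.smul_snd, smul_eq_mul]
    linear_combination c * hx

end Wedge

theorem deltaMap_ker_wedge {p : ℕ} (hp : p.Prime) (n : ℕ) (w : ZMod (p ^ n) × ZMod (p ^ n)) :
    deltaMap p n (wedge w).ker = zmultiples w := by
  have : NeZero (p ^ n) := ⟨pow_ne_zero n hp.ne_zero⟩
  obtain ⟨g, hgN, hrange⟩ := ZMod.exists_dvd_and_eq_zmultiples (wedge w).range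
  obtain ⟨j, hjn, rfl⟩ := (Nat.dvd_prime_pow hp).1 hgN
  have hcard : Nat.card (wedge w).ker = p ^ (n + j) := by
    have h := AddMonoidHom.card_ker_mul_div_eq_card hgN hrange
    rw [Nat.card_prod, Nat.card_zmod, Nat.pow_div hjn hp.pos, ← pow_add] at h
    refine Nat.eq_of_mul_eq_mul_right (pow_pos hp.pos (n - j)) ?_
    rw [h, ← pow_add]
    congr 1
    omega
  have hlen : len p n (wedge w).ker - n = j := by
    rw [len, hcard, hp.factorization_pow, Finsupp.single_eq_same]
    omega
  rw [deltaMap, hlen]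
  exact map_nsmul_ker_wedge hrange

theorem le_iff_deltaMap_le {p : ℕ} (hp : p.Prime) {n : ℕ}
    {H₁ H₂ : AddSubgroup (ZMod (p ^ n) × ZMod (p ^ n))}
    [IsAddCyclic ((ZMod (p ^ n) × ZMod (p ^ n)) ⧸ H₁)]
    [IsAddCyclic ((ZMod (p ^ n) × ZMod (p ^ n)) ⧸ H₂)] :
    H₁ ≤ H₂ ↔ deltaMap p n H₂ ≤ deltaMap p n H₁ := by
  have : NeZero (p ^ n) := ⟨pow_ne_zero n hp.ne_zero⟩
  obtain ⟨v, rfl⟩ := exists_eq_ker_wedge H₁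
  obtain ⟨w, rfl⟩ := exists_eq_ker_wedge H₂
  rw [deltaMap_ker_wedge hp, deltaMap_ker_wedge hp, ker_wedge_le_ker_wedge_iff, zmultiples_le]

theorem stmt_8_general (p : ℕ) (hp : p.Prime) (n : ℕ) :
    Set.BijOn (deltaMap p n)
      {H : AddSubgroup (ZMod (p ^ n) × ZMod (p ^ n)) |
        IsAddCyclic ((ZMod (p ^ n) × ZMod (p ^ n)) ⧸ H)}
      {F : AddSubgroup (ZMod (p ^ n) × ZMod (p ^ n)) |
        ∃ x, F = AddSubgroup.zmultiples x} ∧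
    ∀ H₁ H₂ : AddSubgroup (ZMod (p ^ n) × ZMod (p ^ n)),
      IsAddCyclic ((ZMod (p ^ n) × ZMod (p ^ n)) ⧸ H₁) →
      IsAddCyclic ((ZMod (p ^ n) × ZMod (p ^ n)) ⧸ H₂) →
      (H₁ ≤ H₂ ↔ deltaMap p n H₂ ≤ deltaMap p n H₁) := by
  have : NeZero (p ^ n) := ⟨pow_ne_zero n hp.ne_zero⟩
  refine ⟨⟨?_, ?_, ?_⟩, fun H₁ H₂ _ _ ↦ le_iff_deltaMap_le hp⟩
  · intro H (_ : IsAddCyclic _)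
    obtain ⟨w, rfl⟩ := exists_eq_ker_wedge H
    exact ⟨w, deltaMap_ker_wedge hp n w⟩
  · intro H₁ (_ : IsAddCyclic _) H₂ (_ : IsAddCyclic _) heq
    exact le_antisymm ((le_iff_deltaMap_le hp).2 heq.ge) ((le_iff_deltaMap_le hp).2 heq.le)
  · rintro _ ⟨w, rfl⟩
    exact ⟨(wedge w).ker, isAddCyclic_quotient_ker _, deltaMap_ker_wedge hp n w⟩

/-- `H ↦ H^Δ = pᵐ H` is a bijection from the set of cocyclic subgroups of
`G = ℤ_{pⁿ} ⊕ ℤ_{pⁿ}` onto the set of cyclic subgroups of `G`, and it is order-reversing: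
`H₁ ⊆ H₂ ↔ H₁^Δ ⊇ H₂^Δ`. -/
theorem stmt_8 (p : ℕ) (hp : p.Prime) (n : ℕ) (hn : 1 ≤ n) :
    Set.BijOn (deltaMap p n)
      {H : AddSubgroup (ZMod (p ^ n) × ZMod (p ^ n)) |
        IsAddCyclic ((ZMod (p ^ n) × ZMod (p ^ n)) ⧸ H)}
      {F : AddSubgroup (ZMod (p ^ n) × ZMod (p ^ n)) |
        ∃ x, F = AddSubgroup.zmultiples x} ∧
    ∀ H₁ H₂ : AddSubgroup (ZMod (p ^ n) × ZMod (p ^ n)),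
      IsAddCyclic ((ZMod (p ^ n) × ZMod (p ^ n)) ⧸ H₁) →
      IsAddCyclic ((ZMod (p ^ n) × ZMod (p ^ n)) ⧸ H₂) →
      (H₁ ≤ H₂ ↔ deltaMap p n H₂ ≤ deltaMap p n H₁) :=
  stmt_8_general p hp n
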